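/- Let n ≥ 2, let R be a commutative ℚ-algebra, and let ϖ_1,…,ϖ_{n−1} ∈ R satisfy the Peterson relations, with ϖ_0 = ϖ_n = 0. For J ⊆ {1,…,n−1} set ϖ_J := (1/m_J)·∏_{i∈J} ϖ_i. Then for all J, K ⊆ {1,…,n−1}: ϖ_J · ϖ_K = Σ_{L ⊆ {1,…,n−1}} d_{JK}^L · ϖ_L, where d_{JK}^L = (m_L/(m_J m_K))·Σ_{ε ∈ Δ_{JK}^L} wt(ε) is the left-right diagram structure constant; moreover d_{JK}^L = 0 unless J ∪ K ⊆ L and |L| = |J| + |K|. -/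

import Mathlib

open scoped Classical

noncomputable section

/-- The connected component of `i` in `S ⊆ ℕ`: all `j ∈ S` that are joined to `i` by a
string of consecutive integers lying in `S`. -/
def componentOf (S : Finset ℕ) (i : ℕ) : Finset ℕ :=
  S.filter (fun j => Finset.Icc (min i j) (max i j) ⊆ S)

/-- `m_J`: the product of the factorials of the sizes of the connected components of `J`
(each component is counted once via its minimum, i.e. via `i ∈ J` with `i - 1 ∉ J`). -/
def mConst (J : Finset ℕ) : ℕ :=
  ∏ i ∈ J.filter (fun i => i - 1 ∉ J), (componentOf J i).card.factorial

/-- The left endpoint `a` of the connected component of `i` in `S`. -/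
def compMin (S : Finset ℕ) (i : ℕ) : ℕ :=
  sInf {a | a ≤ i ∧ Finset.Icc a i ⊆ S}

/-- The right endpoint `b` of the connected component of `i` in `S`. -/
def compMax (S : Finset ℕ) (i : ℕ) : ℕ :=
  sSup {b | i ≤ b ∧ Finset.Icc i b ⊆ S}

/-- One step of the left-right game at the marked element `i`; `e = true` means "left"
(adjoin `a − 1`), `e = false` means "right" (adjoin `b + 1`). -/
def lrStep (i : ℕ) (e : Bool) (S : Finset ℕ) : Finset ℕ :=
  if e then insert (compMin S i - 1) S else insert (compMax S i + 1) S

/-- Running a left-right game from the starting set `S`: the final set `S_r`. -/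
def lrRun : Finset ℕ → List (ℕ × Bool) → Finset ℕ
  | S, [] => S
  | S, (i, e) :: rest => lrRun (lrStep i e S) rest

/-- Validity of a left-right game: a "left" move requires `a − 1 ≥ 1` and a "right"
move requires `b + 1 ≤ n − 1`. -/
def lrValid (n : ℕ) : Finset ℕ → List (ℕ × Bool) → Prop
  | _, [] => True
  | S, (i, e) :: rest =>
      (if e then 2 ≤ compMin S i else compMax S i + 1 ≤ n - 1) ∧
        lrValid n (lrStep i e S) rest

/-- The weight of a left-right game: the product over the steps of
`(b − i + 1)/(b − a + 2)` for a "left" move and `(i − a + 1)/(b − a + 2)` for a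
"right" move. -/
def lrWeight : Finset ℕ → List (ℕ × Bool) → ℚ
  | _, [] => 1
  | S, (i, e) :: rest =>
      (if e then ((compMax S i : ℚ) - (i : ℚ) + 1) / ((compMax S i : ℚ) - (compMin S i : ℚ) + 2)
        else ((i : ℚ) - (compMin S i : ℚ) + 1) / ((compMax S i : ℚ) - (compMin S i : ℚ) + 2)) *
        lrWeight (lrStep i e S) rest

/-- The left-right diagram structure constant
`d_{JK}^L = (m_L/(m_J m_K)) · Σ_{ε ∈ Δ_{JK}^L} wt(ε)`: the sum is over all sequences
`ε` of left/right choices (one for each element of `J ∩ K`, taken in increasing order)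
that are valid and whose final set is `L`. -/
def dLR (n : ℕ) (J K L : Finset ℕ) : ℚ :=
  (mConst L : ℚ) / ((mConst J : ℚ) * (mConst K : ℚ)) *
    ∑ ε : Fin (J ∩ K).card → Bool,
      if lrValid n (J ∪ K) (((J ∩ K).sort (· ≤ ·)).zip (List.ofFn ε)) ∧
          lrRun (J ∪ K) (((J ∩ K).sort (· ≤ ·)).zip (List.ofFn ε)) = L then
        lrWeight (J ∪ K) (((J ∩ K).sort (· ≤ ·)).zip (List.ofFn ε))
      else 0

/-!
Fix a marked element `i` of `S ⊆ {1, …, n-1}` and let `[a, b]` be the component of `S`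
containing it. Multiplying the Peterson relation at `k ∈ [a, b]` by `∏_{j ∈ S \ {k}} ϖ_j`
shows that `f(k) = ϖ_k ∏_{j ∈ S} ϖ_j` satisfies `f(k-1) + f(k+1) = 2 f(k)` on `[a, b]`,
so `f` is affine on `[a-1, b+1]`. Interpolating at `k = i` between the endpoints gives
`ϖ_i ϖ_S = w_left ϖ_{S ∪ {a-1}} + w_right ϖ_{S ∪ {b+1}}`, with the weights of the
left-right game; when `a - 1 = 0` or `b + 1 = n` the corresponding product vanishes, which
is why invalid games contribute nothing. Expanding `∏_{J ∩ K} ϖ_i · ∏_{J ∪ K} ϖ_j` one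
marked element at a time therefore yields the sum over valid games, and each step adds
exactly one new element, which gives the support condition.
-/

open Finset

section Components

variable {S : Finset ℕ} {i : ℕ}

lemma compMin_spec (hi : i ∈ S) : compMin S i ≤ i ∧ Icc (compMin S i) i ⊆ S :=
  Nat.sInf_mem (s := {a | a ≤ i ∧ Icc a i ⊆ S}) ⟨i, le_rfl, by simp [hi]⟩

lemma bddAbove_compMax_set : BddAbove {b | i ≤ b ∧ Icc i b ⊆ S} :=
  S.bddAbove.mono fun _ hb => hb.2 (right_mem_Icc.mpr hb.1)

lemma compMax_spec (hi : i ∈ S) : i ≤ compMax S i ∧ Icc i (compMax S i) ⊆ S :=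
  Nat.sSup_mem (s := {b | i ≤ b ∧ Icc i b ⊆ S}) ⟨i, le_rfl, by simp [hi]⟩
    bddAbove_compMax_set

lemma Icc_compMin_compMax_subset (hi : i ∈ S) : Icc (compMin S i) (compMax S i) ⊆ S := by
  intro j hj
  rw [mem_Icc] at hj
  rcases le_total j i with h | h
  · exact (compMin_spec hi).2 (mem_Icc.mpr ⟨hj.1, h⟩)
  · exact (compMax_spec hi).2 (mem_Icc.mpr ⟨h, hj.2⟩)

lemma compMin_mem (hi : i ∈ S) : compMin S i ∈ S :=
  (compMin_spec hi).2 (left_mem_Icc.mpr (compMin_spec hi).1)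

lemma compMax_mem (hi : i ∈ S) : compMax S i ∈ S :=
  (compMax_spec hi).2 (right_mem_Icc.mpr (compMax_spec hi).1)

lemma compMin_sub_one_notMem (hi : i ∈ S) (h : 1 ≤ compMin S i) : compMin S i - 1 ∉ S := by
  intro hmem
  have hle : compMin S i ≤ compMin S i - 1 := by
    refine Nat.sInf_le ⟨by have := (compMin_spec hi).1; omega, fun j hj => ?_⟩
    rw [mem_Icc] at hj
    rcases hj.1.eq_or_lt with rfl | hlt
    · exact hmem
    · exact (compMin_spec hi).2 (mem_Icc.mpr ⟨by omega, hj.2⟩)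
  omega

lemma compMax_add_one_notMem (hi : i ∈ S) : compMax S i + 1 ∉ S := by
  intro hmem
  have hle : compMax S i + 1 ≤ compMax S i := by
    refine le_csSup bddAbove_compMax_set ⟨by have := (compMax_spec hi).1; omega, fun j hj => ?_⟩
    rw [mem_Icc] at hj
    rcases hj.2.eq_or_lt with rfl | hlt
    · exact hmem
    · exact (compMax_spec hi).2 (mem_Icc.mpr ⟨hj.1, by omega⟩)
  omega

lemma mem_of_two_le_compMin (h : 2 ≤ compMin S i) : i ∈ S := by
  by_contra hi
  have hempty : {a | a ≤ i ∧ Icc a i ⊆ S} = ∅ :=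
    Set.eq_empty_of_forall_notMem fun a ha => hi (ha.2 (right_mem_Icc.mpr ha.1))
  have : compMin S i = 0 := Nat.sInf_eq_zero.mpr (Or.inr hempty)
  omega

end Components

section Interpolation

variable {M : Type*} [AddCommGroup M] [Module ℚ M]

lemma eq_interpolate_of_discrete_harmonic (p : ℕ → M) {c d : ℕ} (hcd : c < d)
    (h : ∀ j, c < j → j < d → p (j - 1) + p (j + 1) = 2 • p j) {k : ℕ} (hck : c ≤ k)
    (hkd : k ≤ d) :
    p k = (((d : ℚ) - k) / (d - c)) • p c + (((k : ℚ) - c) / (d - c)) • p d := by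
  set δ := p (c + 1) - p c
  have hlin : ∀ t, c + t ≤ d → p (c + t) = p c + (t : ℚ) • δ := by
    intro t
    induction t using Nat.twoStepInduction with
    | zero => simp
    | one => intro _; simp [δ]
    | more t ih₀ ih₁ =>
      intro ht
      have hj := h (c + (t + 1)) (by omega) (by omega)
      rw [show c + (t + 1) - 1 = c + t by omega, ih₀ (by omega), ih₁ (by omega)] at hj
      rw [show c + (t + 2) = c + (t + 1) + 1 by omega]
      push_cast at hj ⊢
      linear_combination (norm := module) hj
  have hpk := hlin (k - c) (by omega)
  have hpd := hlin (d - c) (by omega)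
  rw [Nat.add_sub_cancel' hck, Nat.cast_sub hck] at hpk
  rw [Nat.add_sub_cancel' hcd.le, Nat.cast_sub hcd.le] at hpd
  have hdc : (d : ℚ) - c ≠ 0 := sub_ne_zero.mpr (by exact_mod_cast hcd.ne')
  have hsum : ((d : ℚ) - k) / (d - c) + ((k : ℚ) - c) / (d - c) = 1 := by
    field_simp; ring
  have hmul : ((k : ℚ) - c) / (d - c) * (d - c) = k - c := div_mul_cancel₀ _ hdc
  rw [hpk, hpd]
  linear_combination (norm := module) (-hsum) • p c - hmul • δ

end Interpolation

lemma sum_ite_smul_eq_sum_fiberwise {ι κ K M : Type*} [Fintype ι] [DecidableEq κ]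
    [Semiring K] [AddCommMonoid M] [Module K M] (P : ι → Prop) [DecidablePred P]
    (w : ι → K) (f : ι → κ) (v : κ → M) (T : Finset κ) (hf : ∀ ε, P ε → f ε ∈ T) :
    ∑ ε, (if P ε then w ε • v (f ε) else 0) =
      ∑ L ∈ T, (∑ ε, if P ε ∧ f ε = L then w ε else 0) • v L := by
  simp_rw [sum_smul, ite_smul, zero_smul]
  rw [sum_comm]
  refine sum_congr rfl fun ε _ => ?_
  by_cases hε : P ε
  · simp [hε, hf ε hε]
  · simp [hε]

section LeftRightGame

def lrStepValid (n : ℕ) (S : Finset ℕ) (i : ℕ) (e : Bool) : Prop :=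
  if e then 2 ≤ compMin S i else compMax S i + 1 ≤ n - 1

def lrStepWeight (S : Finset ℕ) (i : ℕ) (e : Bool) : ℚ :=
  if e then ((compMax S i : ℚ) - (i : ℚ) + 1) / ((compMax S i : ℚ) - (compMin S i : ℚ) + 2)
  else ((i : ℚ) - (compMin S i : ℚ) + 1) / ((compMax S i : ℚ) - (compMin S i : ℚ) + 2)

variable {n : ℕ} {S : Finset ℕ} {i : ℕ} {e : Bool}

lemma lrValid_cons (ms : List (ℕ × Bool)) :
    lrValid n S ((i, e) :: ms) ↔ lrStepValid n S i e ∧ lrValid n (lrStep i e S) ms :=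
  Iff.rfl

lemma lrWeight_cons (ms : List (ℕ × Bool)) :
    lrWeight S ((i, e) :: ms) = lrStepWeight S i e * lrWeight (lrStep i e S) ms :=
  rfl

lemma subset_lrStep : S ⊆ lrStep i e S := by
  cases e <;> exact subset_insert _ _

lemma subset_lrRun (ms : List (ℕ × Bool)) : S ⊆ lrRun S ms := by
  induction ms generalizing S with
  | nil => exact le_rfl
  | cons m ms ih => exact subset_lrStep.trans ih

lemma card_lrStep (hi : i ∈ S) (he : lrStepValid n S i e) :
    (lrStep i e S).card = S.card + 1 := by
  cases e
  · exact card_insert_of_notMem (compMax_add_one_notMem hi)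
  · exact card_insert_of_notMem (compMin_sub_one_notMem hi (by simp [lrStepValid] at he; omega))

lemma card_lrRun (ms : List (ℕ × Bool)) (hv : lrValid n S ms) (hms : ∀ m ∈ ms, m.1 ∈ S) :
    (lrRun S ms).card = S.card + ms.length := by
  induction ms generalizing S with
  | nil => rfl
  | cons m ms ih =>
    obtain ⟨i, e⟩ := m
    obtain ⟨he, hv⟩ := hv
    have hrun := ih hv fun m hm => subset_lrStep (hms m (List.mem_cons_of_mem _ hm))
    rw [List.length_cons, ← add_assoc, add_right_comm,
      ← card_lrStep (hms _ List.mem_cons_self) he]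
    exact hrun

lemma lrStep_subset_Icc (hS : S ⊆ Icc 1 (n - 1)) (he : lrStepValid n S i e) :
    lrStep i e S ⊆ Icc 1 (n - 1) := by
  cases e
  · simp only [lrStepValid, Bool.false_eq_true, if_false] at he
    exact insert_subset (mem_Icc.mpr ⟨by omega, he⟩) hS
  · simp only [lrStepValid, if_true] at he
    have := mem_Icc.mp (hS (compMin_mem (mem_of_two_le_compMin he)))
    exact insert_subset (mem_Icc.mpr ⟨by omega, by omega⟩) hS

lemma lrRun_subset_Icc (ms : List (ℕ × Bool)) (hS : S ⊆ Icc 1 (n - 1)) (hv : lrValid n S ms) :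
    lrRun S ms ⊆ Icc 1 (n - 1) := by
  induction ms generalizing S with
  | nil => exact hS
  | cons m ms ih => exact ih (lrStep_subset_Icc hS hv.1) hv.2

lemma card_lrRun_union {J K : Finset ℕ} (ε : Fin (J ∩ K).card → Bool)
    (hv : lrValid n (J ∪ K) (((J ∩ K).sort (· ≤ ·)).zip (List.ofFn ε))) :
    (lrRun (J ∪ K) (((J ∩ K).sort (· ≤ ·)).zip (List.ofFn ε))).card = J.card + K.card := by
  have hmarks : ∀ m ∈ ((J ∩ K).sort (· ≤ ·)).zip (List.ofFn ε), m.1 ∈ J ∪ K :=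
    fun m hm => inter_subset_union ((mem_sort _).mp (List.of_mem_zip hm).1)
  rw [card_lrRun _ hv hmarks, List.length_zip, List.length_ofFn, length_sort, min_self,
    card_union_add_card_inter]

end LeftRightGame

section Peterson

variable {R : Type*} [CommRing R] {n : ℕ} {ϖ : ℕ → R} {S : Finset ℕ} {i : ℕ}

def PetersonRelations (n : ℕ) (ϖ : ℕ → R) : Prop :=
  ∀ i : ℕ, 1 ≤ i → i ≤ n - 1 → ϖ i * (2 * ϖ i - ϖ (i - 1) - ϖ (i + 1)) = 0

lemma peterson_mul_prod (hrel : PetersonRelations n ϖ) (hS : S ⊆ Icc 1 (n - 1)) {j : ℕ}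
    (hj : j ∈ S) :
    ϖ (j - 1) * ∏ k ∈ S, ϖ k + ϖ (j + 1) * ∏ k ∈ S, ϖ k = 2 • (ϖ j * ∏ k ∈ S, ϖ k) := by
  have hjn := mem_Icc.mp (hS hj)
  rw [← mul_prod_erase S ϖ hj]
  linear_combination (-∏ k ∈ S.erase j, ϖ k) * hrel j hjn.1 hjn.2

lemma prod_lrStep_eq_zero (h0 : ϖ 0 = 0) (htop : ϖ n = 0) (hS : S ⊆ Icc 1 (n - 1))
    (hi : i ∈ S) {e : Bool} (he : ¬ lrStepValid n S i e) : ∏ k ∈ lrStep i e S, ϖ k = 0 := by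
  cases e
  · simp only [lrStepValid, Bool.false_eq_true, if_false] at he
    have := mem_Icc.mp (hS (compMax_mem hi))
    exact prod_eq_zero (mem_insert_self _ _) (by rwa [show compMax S i + 1 = n by omega])
  · simp only [lrStepValid, if_true] at he
    have := mem_Icc.mp (hS (compMin_mem hi))
    exact prod_eq_zero (mem_insert_self _ _) (by rwa [show compMin S i - 1 = 0 by omega])

variable [Algebra ℚ R]

lemma mul_prod_eq_sum_lrStep (hrel : PetersonRelations n ϖ) (hS : S ⊆ Icc 1 (n - 1))
    (hi : i ∈ S) :
    ϖ i * ∏ k ∈ S, ϖ k =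
      ∑ e : Bool, lrStepWeight S i e • ∏ k ∈ lrStep i e S, ϖ k := by
  have ha := mem_Icc.mp (hS (compMin_mem hi))
  have hai := (compMin_spec hi).1
  have hib := (compMax_spec hi).1
  have hab := Icc_compMin_compMax_subset hi
  have hinterp := eq_interpolate_of_discrete_harmonic (fun k => ϖ k * ∏ k ∈ S, ϖ k)
    (c := compMin S i - 1) (d := compMax S i + 1) (by omega)
    (fun j hcj hjd => peterson_mul_prod hrel hS (hab (mem_Icc.mpr ⟨by omega, by omega⟩)))
    (k := i) (by omega) (by omega)
  rw [hinterp, Fintype.sum_bool]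
  simp only [lrStepWeight, lrStep, if_true, Bool.false_eq_true, if_false]
  rw [prod_insert (compMin_sub_one_notMem hi ha.1), prod_insert (compMax_add_one_notMem hi),
    Nat.cast_sub ha.1]
  push_cast
  congr 2 <;> ring

lemma prod_mul_prod_eq_sum_lrGames (h0 : ϖ 0 = 0) (htop : ϖ n = 0) (hrel : PetersonRelations n ϖ)
    (l : List ℕ) (hS : S ⊆ Icc 1 (n - 1)) (hl : ∀ i ∈ l, i ∈ S) :
    (l.map ϖ).prod * ∏ k ∈ S, ϖ k =
      ∑ ε : Fin l.length → Bool,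
        if lrValid n S (l.zip (List.ofFn ε)) then
          lrWeight S (l.zip (List.ofFn ε)) • ∏ k ∈ lrRun S (l.zip (List.ofFn ε)), ϖ k
        else 0 := by
  induction l generalizing S with
  | nil => simp [lrValid, lrWeight, lrRun]
  | cons i l ih =>
    have hi : i ∈ S := hl i List.mem_cons_self
    rw [List.length_cons, ← (Fin.consEquiv fun _ => Bool).sum_comp, Fintype.sum_prod_type]
    simp only [Fin.consEquiv_apply, List.ofFn_succ, Fin.cons_zero, Fin.cons_succ,
      List.zip_cons_cons, lrValid_cons, lrWeight_cons, lrRun]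
    calc ((i :: l).map ϖ).prod * ∏ k ∈ S, ϖ k
        = (l.map ϖ).prod * (ϖ i * ∏ k ∈ S, ϖ k) := by
          rw [List.map_cons, List.prod_cons]; ring
      _ = ∑ e : Bool, if lrStepValid n S i e then
            lrStepWeight S i e • ((l.map ϖ).prod * ∏ k ∈ lrStep i e S, ϖ k) else 0 := by
        rw [mul_prod_eq_sum_lrStep hrel hS hi, mul_sum]
        refine sum_congr rfl fun e _ => ?_
        split_ifs with he
        · exact mul_smul_comm _ _ _
        · rw [prod_lrStep_eq_zero h0 htop hS hi he, smul_zero, mul_zero]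
      _ = _ := by
        refine sum_congr rfl fun e _ => ?_
        split_ifs with he
        · rw [ih (lrStep_subset_Icc hS he)
            fun j hj => subset_lrStep (hl j (List.mem_cons_of_mem _ hj)), smul_sum]
          simp [he, mul_smul, smul_ite]
        · simp [he]

lemma prod_mul_prod_eq_sum_powerset (h0 : ϖ 0 = 0) (htop : ϖ n = 0)
    (hrel : PetersonRelations n ϖ) {J K : Finset ℕ} (hJ : J ⊆ Icc 1 (n - 1))
    (hK : K ⊆ Icc 1 (n - 1)) :
    (∏ i ∈ J, ϖ i) * ∏ i ∈ K, ϖ i =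
      ∑ L ∈ (Icc 1 (n - 1)).powerset,
        (∑ ε : Fin (J ∩ K).card → Bool,
          if lrValid n (J ∪ K) (((J ∩ K).sort (· ≤ ·)).zip (List.ofFn ε)) ∧
              lrRun (J ∪ K) (((J ∩ K).sort (· ≤ ·)).zip (List.ofFn ε)) = L then
            lrWeight (J ∪ K) (((J ∩ K).sort (· ≤ ·)).zip (List.ofFn ε))
          else 0) • ∏ i ∈ L, ϖ i := by
  have hJK : J ∪ K ⊆ Icc 1 (n - 1) := union_subset hJ hK
  have hprod : (((J ∩ K).sort (· ≤ ·)).map ϖ).prod = ∏ i ∈ J ∩ K, ϖ i := by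
    rw [← Multiset.prod_coe, ← Multiset.map_coe, sort_eq]
    rfl
  have hgames := prod_mul_prod_eq_sum_lrGames h0 htop hrel ((J ∩ K).sort (· ≤ ·)) hJK
    fun i hi => inter_subset_union ((mem_sort _).mp hi)
  rw [length_sort, hprod] at hgames
  rw [← prod_union_inter, mul_comm, hgames]
  exact sum_ite_smul_eq_sum_fiberwise _ _ _ (fun L => ∏ i ∈ L, ϖ i) _
    fun ε hv => mem_powerset.mpr (lrRun_subset_Icc _ hJK hv)

end Peterson

lemma mConst_ne_zero (J : Finset ℕ) : (mConst J : ℚ) ≠ 0 := by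
  unfold mConst
  exact_mod_cast (prod_pos fun _ _ => Nat.factorial_pos _).ne'

theorem peterson_basis_structure_constants (n : ℕ)
    {R : Type*} [CommRing R] [Algebra ℚ R] (ϖ : ℕ → R)
    (h0 : ϖ 0 = 0) (htop : ϖ n = 0)
    (hrel : ∀ i : ℕ, 1 ≤ i → i ≤ n - 1 → ϖ i * (2 * ϖ i - ϖ (i - 1) - ϖ (i + 1)) = 0)
    (J K : Finset ℕ) (hJ : J ⊆ Finset.Icc 1 (n - 1)) (hK : K ⊆ Finset.Icc 1 (n - 1)) :
    (((mConst J : ℚ))⁻¹ • ∏ i ∈ J, ϖ i) * (((mConst K : ℚ))⁻¹ • ∏ i ∈ K, ϖ i) =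
      (∑ L ∈ (Finset.Icc 1 (n - 1)).powerset,
        dLR n J K L • (((mConst L : ℚ))⁻¹ • ∏ i ∈ L, ϖ i)) ∧
    ∀ L : Finset ℕ, ¬(J ∪ K ⊆ L ∧ L.card = J.card + K.card) → dLR n J K L = 0 := by
  refine ⟨?_, fun L hL => ?_⟩
  · rw [smul_mul_smul_comm, prod_mul_prod_eq_sum_powerset h0 htop hrel hJ hK, smul_sum]
    refine sum_congr rfl fun L _ => ?_
    rw [dLR, smul_smul, smul_smul]
    congr 1
    field_simp [mConst_ne_zero]
    rw [mul_div_mul_right _ _ (mConst_ne_zero L)]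
  · rw [dLR, sum_eq_zero, mul_zero]
    exact fun ε _ => if_neg fun ⟨hv, hrun⟩ =>
      hL ⟨hrun ▸ subset_lrRun _, hrun ▸ card_lrRun_union ε hv⟩
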